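/- Given Y(a,b) := e^{aλA} e^{bλB} e^{-aλA} · e^{-aλA} e^{-bλB} e^{aλA}, the product Y(a,b)·Y(a,-b) can be written as exp of an element whose degree-1-in-B part vanishes: the terms linear in b cancel, leaving leading term 2ab²λ³[B,[A,B]] plus corrections of order λ⁵ (in a free nilpotent Lie algebra truncated at degree 4). -/

import Mathlib

/-!
Writing `A` for `aλA` and `B` for `bλB`, all exponentials are polynomials, because every word of
length five in `A` and `B` vanishes. Expanding, `Y(A, B) = 1 + Q₁ + Q₂ + Q₃` with `Qₖ` homogeneous
of degree `k` in `B`: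
`Q₁ = 2[A,B] + ⅓[A,[A,[A,B]]]`, `Q₂ = [B,[A,B]] + 2[A,B]²`, `Q₃ = ⅓[B,[B,[A,B]]]`.
Hence `Y(A, -B) = 1 - Q₁ + Q₂ - Q₃`, and since every product `QᵢQⱼ` other than `Q₁²` consists of
words of length at least five, `Y(A, B) Y(A, -B) = 1 + 2Q₂ - Q₁² = 1 + 2[B,[A,B]]`. This is
`exp (2[B,[A,B]])`, as the square of `[B,[A,B]]` vanishes.
-/

open NormedSpace Finset
open scoped Nat

section Words

variable {R 𝔸 : Type*} [Semiring 𝔸]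

def WordsOfLengthFiveVanish (A B : 𝔸) : Prop :=
  ∀ V W X Y Z : 𝔸, V ∈ ({A, B} : Set 𝔸) → W ∈ ({A, B} : Set 𝔸) → X ∈ ({A, B} : Set 𝔸) →
    Y ∈ ({A, B} : Set 𝔸) → Z ∈ ({A, B} : Set 𝔸) → V * W * X * Y * Z = 0

namespace WordsOfLengthFiveVanish

variable {A B : 𝔸}

theorem smul [CommSemiring R] [Module R 𝔸] [IsScalarTower R 𝔸 𝔸] [SMulCommClass R 𝔸 𝔸]
    (h : WordsOfLengthFiveVanish A B) (c d : R) : WordsOfLengthFiveVanish (c • A) (d • B) := by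
  unfold WordsOfLengthFiveVanish at h ⊢
  intro V W X Y Z hV hW hX hY hZ
  simp only [Set.mem_insert_iff, Set.mem_singleton_iff] at hV hW hX hY hZ
  rcases hV with rfl | rfl <;> rcases hW with rfl | rfl <;> rcases hX with rfl | rfl <;>
    rcases hY with rfl | rfl <;> rcases hZ with rfl | rfl <;>
    simp (disch := simp) only [smul_mul_assoc, mul_smul_comm, h, smul_zero]

theorem pow_five_left (h : WordsOfLengthFiveVanish A B) : A ^ 5 = 0 := by
  simpa [pow_succ] using h A A A A A (by simp) (by simp) (by simp) (by simp) (by simp)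

theorem pow_five_right (h : WordsOfLengthFiveVanish A B) : B ^ 5 = 0 := by
  simpa [pow_succ] using h B B B B B (by simp) (by simp) (by simp) (by simp) (by simp)

end WordsOfLengthFiveVanish

end Words

section Exp

variable {𝔸 : Type*} [Ring 𝔸] [Algebra ℚ 𝔸] [TopologicalSpace 𝔸] [IsTopologicalRing 𝔸]

theorem exp_eq_sum_range_of_pow_eq_zero {x : 𝔸} {k : ℕ} (h : x ^ k = 0) :
    exp x = ∑ i ∈ range k, (i ! : ℚ)⁻¹ • x ^ i := by
  rw [exp_eq_tsum_rat]
  exact tsum_eq_sum fun i hi => by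
    rw [pow_eq_zero_of_le (by simpa using hi) h, smul_zero]

theorem exp_eq_of_pow_five_eq_zero {x : 𝔸} (h : x ^ 5 = 0) :
    exp x = 1 + x + (1 / 2 : ℚ) • x ^ 2 + (1 / 6 : ℚ) • x ^ 3 + (1 / 24 : ℚ) • x ^ 4 := by
  simp [exp_eq_sum_range_of_pow_eq_zero h, sum_range_succ, Nat.factorial]

theorem exp_eq_one_add_of_sq_eq_zero {x : 𝔸} (h : x ^ 2 = 0) : exp x = 1 + x := by
  simp [exp_eq_sum_range_of_pow_eq_zero h, sum_range_succ]

/-- `conjExp A B` and `conjExpPair A B` are the paper's `X(a, b)` and `Y(a, b)`, with the scalars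
`aλ` and `bλ` absorbed into `A` and `B`. -/
noncomputable def conjExp (A B : 𝔸) : 𝔸 := exp A * exp B * exp (-A)

noncomputable def conjExpPair (A B : 𝔸) : 𝔸 := conjExp A B * conjExp (-A) (-B)

variable {A B : 𝔸}

theorem conjExpPair_eq (h : WordsOfLengthFiveVanish A B) :
    conjExpPair A B =
      1 + (2 • ⁅A, B⁆ + (1 / 3 : ℚ) • ⁅A, ⁅A, ⁅A, B⁆⁆⁆) + (⁅B, ⁅A, B⁆⁆ + 2 • (⁅A, B⁆ * ⁅A, B⁆))
        + (1 / 3 : ℚ) • ⁅B, ⁅B, ⁅A, B⁆⁆⁆ := by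
  have hA : (-A) ^ 5 = 0 := by rw [Odd.neg_pow (by decide), h.pow_five_left, neg_zero]
  have hB : (-B) ^ 5 = 0 := by rw [Odd.neg_pow (by decide), h.pow_five_right, neg_zero]
  rw [conjExpPair, conjExp, conjExp, neg_neg, exp_eq_of_pow_five_eq_zero h.pow_five_left,
    exp_eq_of_pow_five_eq_zero h.pow_five_right, exp_eq_of_pow_five_eq_zero hA,
    exp_eq_of_pow_five_eq_zero hB]
  unfold WordsOfLengthFiveVanish at h
  simp (disch := simp) only [Ring.lie_def, pow_succ, pow_zero, one_mul, neg_mul, mul_neg, neg_neg,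
    smul_neg, mul_sub, sub_mul, mul_add, add_mul, smul_mul_assoc, mul_smul_comm, mul_one,
    ← mul_assoc, h, smul_zero, neg_zero, add_zero]
  module

theorem conjExpPair_mul_conjExpPair_neg_right (h : WordsOfLengthFiveVanish A B) :
    conjExpPair A B * conjExpPair A (-B) = exp (2 • ⁅B, ⁅A, B⁆⁆) := by
  have hneg : WordsOfLengthFiveVanish A (-B) := by simpa using h.smul (1 : ℚ) (-1)
  unfold WordsOfLengthFiveVanish at h
  have hsq : (2 • ⁅B, ⁅A, B⁆⁆) ^ 2 = 0 := by
    simp (disch := simp) only [Ring.lie_def, pow_succ, pow_zero, one_mul, smul_mul_assoc,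
      mul_smul_comm, mul_sub, sub_mul, ← mul_assoc, h, zero_mul, smul_zero, sub_zero]
  rw [conjExpPair_eq h, conjExpPair_eq hneg, exp_eq_one_add_of_sq_eq_zero hsq]
  simp (disch := simp) only [Ring.lie_def, neg_mul, mul_neg, neg_neg, mul_sub, sub_mul, mul_add,
    add_mul, smul_mul_assoc, mul_smul_comm, one_mul, mul_one, ← mul_assoc, h, zero_mul]
  module

end Exp

/-- In a setting nilpotent of class 4 (all products of five elements from `{A, B}` vanish),
with `X(a,b) := e^{aλA} e^{bλB} e^{-aλA}` and `Y(a,b) := X(a,b) X(-a,-b)`, the terms linear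
in `b` cancel in `Y(a,b)·Y(a,-b)` and
`Y(a,b)·Y(a,-b) = exp(2ab²λ³ [B,[A,B]])`. -/
theorem compilation_Yab_identity {n : ℕ} (A B : Matrix (Fin n) (Fin n) ℂ) (a b l : ℂ)
    (hnil : ∀ V W X Y Z : Matrix (Fin n) (Fin n) ℂ,
      V ∈ ({A, B} : Set (Matrix (Fin n) (Fin n) ℂ)) →
      W ∈ ({A, B} : Set (Matrix (Fin n) (Fin n) ℂ)) →
      X ∈ ({A, B} : Set (Matrix (Fin n) (Fin n) ℂ)) →
      Y ∈ ({A, B} : Set (Matrix (Fin n) (Fin n) ℂ)) →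
      Z ∈ ({A, B} : Set (Matrix (Fin n) (Fin n) ℂ)) → V * W * X * Y * Z = 0) :
    let X : ℂ → ℂ → Matrix (Fin n) (Fin n) ℂ := fun u v =>
      exp ((u * l) • A) * exp ((v * l) • B) * exp (-((u * l) • A))
    let Y : ℂ → ℂ → Matrix (Fin n) (Fin n) ℂ := fun u v => X u v * X (-u) (-v)
    Y a b * Y a (-b) =
      exp ((2 * a * b ^ 2 * l ^ 3) • (B * (A * B - B * A) - (A * B - B * A) * B)) := by
  intro X Y
  have hscaled : WordsOfLengthFiveVanish ((a * l) • A) ((b * l) • B) :=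
    WordsOfLengthFiveVanish.smul hnil _ _
  have hrhs : (2 * a * b ^ 2 * l ^ 3) • (B * (A * B - B * A) - (A * B - B * A) * B) =
      2 • ⁅(b * l) • B, ⁅(a * l) • A, (b * l) • B⁆⁆ := by
    simp only [Ring.lie_def, smul_mul_smul_comm, smul_sub, mul_sub, sub_mul]
    module
  rw [hrhs, ← conjExpPair_mul_conjExpPair_neg_right hscaled]
  simp only [Y, X, conjExpPair, conjExp, neg_mul, neg_smul, neg_neg]
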